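/- arXiv:2401.04672 — 10 statements merged into one kernel-verified Lean document; each statement's English description precedes it below -/
import Mathlib

section
/- For every dimension d ≥ 1, every n ≥ 1, and every choice of pairwise distinct noise parameters p_1, …, p_{n+1} ∈ [0,1), there exist real numbers η_0, η_1, …, η_{n+1} with η_0 + η_1 + ⋯ + η_{n+1} = 1 such that for every i ∈ {1,…,n+1}: η_0·𝒟_1 + Σ_{k=1}^{n+1} η_k·(𝒟_{p_i})^{∘k} = id as linear maps on M_d(ℂ), where (𝒟_{p_i})^{∘k} denotes the k-fold composition of 𝒟_{p_i} with itself. (The coefficients η_j do not depend on i; this is the map-level content of the paper's Theorem 1 that an n-slot virtual comb exactly reverses a depolarizing channel whose unknown noise parameter is one of n+1 candidates.) -/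
/-- The depolarizing map `𝒟_p` on `M_d(ℂ)`: `𝒟_p(X) = (1−p)·X + p·tr(X)·I_d/d`. -/
noncomputable def dep (d : ℕ) (p : ℝ) (X : Matrix (Fin d) (Fin d) ℂ) :
    Matrix (Fin d) (Fin d) ℂ :=
  ((1 : ℂ) - (p : ℂ)) • X +
    ((p : ℂ) / (d : ℂ)) • (Matrix.trace X • (1 : Matrix (Fin d) (Fin d) ℂ))

lemma dep_iterate (d : ℕ) (hd : 1 ≤ d) (p : ℝ) (X : Matrix (Fin d) (Fin d) ℂ) (k : ℕ) :
    (dep d p)^[k] X = ((1 - (p:ℂ))^k) • X +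
      ((1 - (1 - (p:ℂ))^k)/(d:ℂ)) • (Matrix.trace X • (1 : Matrix (Fin d) (Fin d) ℂ)) := by
  have hd' : (d:ℂ) ≠ 0 := Nat.cast_ne_zero.mpr (by omega)
  induction k with
  | zero => simp
  | succ k ih =>
    rw [Function.iterate_succ_apply', ih]
    have htr : Matrix.trace (((1 - (p:ℂ))^k) • X +
        ((1 - (1 - (p:ℂ))^k)/(d:ℂ)) • (Matrix.trace X • (1 : Matrix (Fin d) (Fin d) ℂ)))
        = Matrix.trace X := by
      simp [Matrix.trace_smul, Matrix.trace_one]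
      field_simp
      ring
    unfold dep
    rw [htr]
    module

/-- For every `d ≥ 1`, `n ≥ 1` and pairwise distinct
`p_1, …, p_{n+1} ∈ [0,1)`, there exist reals `η_0, …, η_{n+1}` summing to `1` such that
for every `i`, `η_0·𝒟_1 + Σ_{k=1}^{n+1} η_k·(𝒟_{p_i})^{∘k} = id` on `M_d(ℂ)`. -/
theorem stmt0 (d n : ℕ) (hd : 1 ≤ d) (hn : 1 ≤ n)
    (p : Fin (n + 1) → ℝ) (hp : ∀ i, p i ∈ Set.Ico (0 : ℝ) 1)
    (hinj : Function.Injective p) :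
    ∃ η : ℕ → ℝ, (∑ j ∈ Finset.range (n + 2), η j) = 1 ∧
      ∀ i : Fin (n + 1), ∀ X : Matrix (Fin d) (Fin d) ℂ,
        η 0 • dep d 1 X +
          (∑ k ∈ Finset.Icc 1 (n + 1), η k • (dep d (p i))^[k] X) = X := by
  have hd' : (d:ℂ) ≠ 0 := Nat.cast_ne_zero.mpr (by omega)
  set x : Fin (n+1) → ℝ := fun i => 1 - p i with hx
  have hx0 : ∀ i, x i ≠ 0 := fun i => by have := (hp i).2; simp [hx]; linarith
  have hxinj : Function.Injective x := fun i j h =>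
    hinj (by simpa [hx, sub_right_injective.eq_iff] using h)
  set M : Matrix (Fin (n+1)) (Fin (n+1)) ℝ := Matrix.of fun i j => x i ^ ((j:ℕ)+1) with hM
  have hMd : M = Matrix.diagonal x * Matrix.vandermonde x := by
    ext i j
    simp [hM, Matrix.diagonal_mul, Matrix.vandermonde, pow_succ']
  have hdet : M.det ≠ 0 := by
    rw [hMd, Matrix.det_mul, Matrix.det_diagonal, Matrix.det_vandermonde]
    refine mul_ne_zero (Finset.prod_ne_zero_iff.mpr fun i _ => hx0 i)
      (Finset.prod_ne_zero_iff.mpr fun i _ => Finset.prod_ne_zero_iff.mpr fun j hj => ?_)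
    have : i ≠ j := by rintro rfl; simp [Finset.mem_Ioi] at hj
    exact sub_ne_zero_of_ne fun h => this (hxinj h.symm)
  set c : Fin (n+1) → ℝ := M⁻¹.mulVec (fun _ => 1) with hcdef
  have hc : M.mulVec c = fun _ => 1 := by
    rw [hcdef, Matrix.mulVec_mulVec, Matrix.mul_nonsing_inv _ (isUnit_iff_ne_zero.mpr hdet),
      Matrix.one_mulVec]
  have hci : ∀ i, ∑ j : Fin (n+1), x i ^ ((j:ℕ)+1) * c j = 1 := by
    intro i
    have := congrFun hc i
    simpa [Matrix.mulVec, dotProduct, hM] using this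
  classical
  refine ⟨fun j => if h : 1 ≤ j ∧ j ≤ n+1 then c ⟨j-1, by omega⟩
      else if j = 0 then 1 - ∑ k, c k else 0, ?_, ?_⟩
  case _ =>
    set η : ℕ → ℝ := fun j => if h : 1 ≤ j ∧ j ≤ n+1 then c ⟨j-1, by omega⟩
      else if j = 0 then 1 - ∑ k, c k else 0 with hη
    show ∑ j ∈ Finset.range (n + 2), η j = 1
    have hsplit : Finset.range (n+2) = insert 0 (Finset.Icc 1 (n+1)) := by
      ext j; simp [Finset.mem_range, Finset.mem_Icc]; omega
    rw [hsplit, Finset.sum_insert (by simp)]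
    have h1 : ∑ j ∈ Finset.Icc 1 (n+1), η j = ∑ k, c k := by
      rw [show Finset.Icc 1 (n+1) = Finset.Ico 1 (n+2) from by ext j; simp; omega,
        Finset.sum_Ico_eq_sum_range]
      have : n + 2 - 1 = n + 1 := by omega
      rw [this, ← Fin.sum_univ_eq_sum_range (fun j => η (1 + j))]
      refine Finset.sum_congr rfl fun j _ => ?_
      have hj : 1 ≤ 1 + (j:ℕ) ∧ 1 + (j:ℕ) ≤ n + 1 := ⟨by omega, by omega⟩
      simp only [hη, dif_pos hj]
      congr 1
      ext
      simp
    rw [h1]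
    have h0 : η 0 = 1 - ∑ k, c k := by simp [hη]
    rw [h0]; ring
  case _ =>
    intro i X
    set η : ℕ → ℝ := fun j => if h : 1 ≤ j ∧ j ≤ n+1 then c ⟨j-1, by omega⟩
      else if j = 0 then 1 - ∑ k, c k else 0 with hη
    set Y : Matrix (Fin d) (Fin d) ℂ := Matrix.trace X • (1 : Matrix (Fin d) (Fin d) ℂ) with hY
    -- key real identities
    have hkey : ∑ k ∈ Finset.Icc 1 (n+1), η k * (x i)^k = 1 := by
      rw [show Finset.Icc 1 (n+1) = Finset.Ico 1 (n+2) from by ext j; simp; omega,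
        Finset.sum_Ico_eq_sum_range]
      have hnn : n + 2 - 1 = n + 1 := by omega
      rw [hnn, ← Fin.sum_univ_eq_sum_range (fun j => η (1 + j) * x i ^ (1 + j))]
      rw [← hci i]
      refine Finset.sum_congr rfl fun j _ => ?_
      have hj : 1 ≤ 1 + (j:ℕ) ∧ 1 + (j:ℕ) ≤ n + 1 := ⟨by omega, by omega⟩
      simp only [hη, dif_pos hj]
      have : (⟨1 + (j:ℕ) - 1, by omega⟩ : Fin (n+1)) = j := by ext; simp
      rw [this, mul_comm, add_comm 1 (j:ℕ)]
    have hS : η 0 + ∑ k ∈ Finset.Icc 1 (n+1), η k = 1 := by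
      have h0 : η 0 = 1 - ∑ k, c k := by simp [hη]
      have h1 : ∑ j ∈ Finset.Icc 1 (n+1), η j = ∑ k, c k := by
        rw [show Finset.Icc 1 (n+1) = Finset.Ico 1 (n+2) from by ext j; simp; omega,
          Finset.sum_Ico_eq_sum_range]
        have : n + 2 - 1 = n + 1 := by omega
        rw [this, ← Fin.sum_univ_eq_sum_range (fun j => η (1 + j))]
        refine Finset.sum_congr rfl fun j _ => ?_
        have hj : 1 ≤ 1 + (j:ℕ) ∧ 1 + (j:ℕ) ≤ n + 1 := ⟨by omega, by omega⟩
        simp only [hη, dif_pos hj]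
        congr 1
        ext; simp
      rw [h0, h1]; ring
    -- rewrite each iterate
    have hterm : ∀ k ∈ Finset.Icc 1 (n+1), η k • (dep d (p i))^[k] X =
        ((η k : ℂ) * (1 - (p i:ℂ))^k) • X +
        ((η k : ℂ) * ((1 - (1 - (p i:ℂ))^k)/(d:ℂ))) • Y := by
      intro k _
      rw [dep_iterate d hd (p i) X k, ← hY]
      rw [show (η k • (((1 - (p i:ℂ))^k) • X + ((1 - (1 - (p i:ℂ))^k)/(d:ℂ)) • Y) :
          Matrix (Fin d) (Fin d) ℂ) =
          ((η k : ℂ)) • (((1 - (p i:ℂ))^k) • X + ((1 - (1 - (p i:ℂ))^k)/(d:ℂ)) • Y) from by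
        rw [← algebraMap_smul ℂ (η k)]; rfl]
      rw [smul_add, smul_smul, smul_smul]
    rw [Finset.sum_congr rfl hterm, Finset.sum_add_distrib, ← Finset.sum_smul, ← Finset.sum_smul]
    have hdep1 : dep d 1 X = ((1:ℂ)/(d:ℂ)) • Y := by
      unfold dep; rw [← hY]; norm_num
    rw [hdep1]
    rw [show (η 0 • (((1:ℂ)/(d:ℂ)) • Y) : Matrix (Fin d) (Fin d) ℂ) =
        ((η 0 : ℂ) * ((1:ℂ)/(d:ℂ))) • Y from by
      rw [← algebraMap_smul ℂ (η 0), smul_smul]; rfl]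
    have hkey' : ∑ k ∈ Finset.Icc 1 (n+1), η k * (1 - p i)^k = 1 := hkey
    have hA : (∑ k ∈ Finset.Icc 1 (n+1), (η k : ℂ) * (1 - (p i:ℂ))^k) = 1 := by
      calc ∑ k ∈ Finset.Icc 1 (n+1), (η k : ℂ) * (1 - (p i:ℂ))^k
          = ((∑ k ∈ Finset.Icc 1 (n+1), η k * (1 - p i)^k : ℝ) : ℂ) := by push_cast; ring_nf
        _ = 1 := by rw [hkey']; norm_num
    have hB : ((η 0 : ℂ) * ((1:ℂ)/(d:ℂ))) +
        (∑ k ∈ Finset.Icc 1 (n+1), (η k : ℂ) * ((1 - (1 - (p i:ℂ))^k)/(d:ℂ))) = 0 := by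
      have hsum : ∑ k ∈ Finset.Icc 1 (n+1), (η k : ℂ) * ((1 - (1 - (p i:ℂ))^k)/(d:ℂ)) =
          ((∑ k ∈ Finset.Icc 1 (n+1), (η k : ℂ)) -
            (∑ k ∈ Finset.Icc 1 (n+1), (η k : ℂ) * (1 - (p i:ℂ))^k)) / (d:ℂ) := by
        rw [sub_div, Finset.sum_div, Finset.sum_div, ← Finset.sum_sub_distrib]
        refine Finset.sum_congr rfl fun k _ => ?_
        field_simp
      rw [hsum, hA]
      have hSc : (η 0 : ℂ) + ∑ k ∈ Finset.Icc 1 (n+1), (η k : ℂ) = 1 := by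
        exact_mod_cast congrArg (Complex.ofReal) hS
      have : (∑ k ∈ Finset.Icc 1 (n+1), (η k : ℂ)) = 1 - (η 0 : ℂ) := by linear_combination hSc
      rw [this]
      field_simp
      ring
    rw [hA, one_smul, add_left_comm, ← add_smul, hB, zero_smul, add_zero]
end

section
/- Let d ≥ 2. For every n ≥ 1 and every choice of pairwise distinct noise parameters p_1, …, p_{n+2} ∈ [0,1), there do NOT exist real numbers η_0, η_1, …, η_{n+1} with η_0 + η_1 + ⋯ + η_{n+1} = 1 such that for every i ∈ {1,…,n+2}: η_0·𝒟_1 + Σ_{k=1}^{n+1} η_k·(𝒟_{p_i})^{∘k} = id as linear maps on M_d(ℂ). (This is the map-level content of the paper's no-go Theorem 2: no n-slot virtual comb of the protocol form can exactly reverse n+2 distinct depolarizing channels.) -/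
lemma dep_traceless (d : ℕ) (q : ℝ) (X : Matrix (Fin d) (Fin d) ℂ)
    (hX : Matrix.trace X = 0) : dep d q X = ((1 : ℂ) - (q : ℂ)) • X := by
  simp [dep, hX]

lemma dep_iter_traceless (d : ℕ) (q : ℝ) (X : Matrix (Fin d) (Fin d) ℂ)
    (hX : Matrix.trace X = 0) (k : ℕ) :
    (dep d q)^[k] X = (((1 : ℂ) - (q : ℂ)) ^ k) • X := by
  induction k with
  | zero => simp
  | succ k ih =>
    rw [Function.iterate_succ_apply', ih, dep_traceless, smul_smul, ← pow_succ']
    simp [Matrix.trace_smul, hX]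

open Polynomial in
/-- **no-go.** For `d ≥ 2`, every `n ≥ 1` and pairwise distinct
`p_1, …, p_{n+2} ∈ [0,1)`, there do NOT exist reals `η_0, …, η_{n+1}` summing to `1` with
`η_0·𝒟_1 + Σ_{k=1}^{n+1} η_k·(𝒟_{p_i})^{∘k} = id` on `M_d(ℂ)` for every `i`. -/
theorem stmt2 (d n : ℕ) (hd : 2 ≤ d) (hn : 1 ≤ n)
    (p : Fin (n + 2) → ℝ) (hp : ∀ i, p i ∈ Set.Ico (0 : ℝ) 1)
    (hinj : Function.Injective p) :
    ¬ ∃ η : ℕ → ℝ, (∑ j ∈ Finset.range (n + 2), η j) = 1 ∧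
      ∀ i : Fin (n + 2), ∀ X : Matrix (Fin d) (Fin d) ℂ,
        η 0 • dep d 1 X +
          (∑ k ∈ Finset.Icc 1 (n + 1), η k • (dep d (p i))^[k] X) = X := by
  rintro ⟨η, -, hmain⟩
  -- traceless test matrix
  have hd0 : 0 < d := by omega
  have hd1 : 1 < d := by omega
  set i0 : Fin d := ⟨0, hd0⟩ with hi0
  set i1 : Fin d := ⟨1, hd1⟩ with hi1
  have h01 : i0 ≠ i1 := by simp [hi0, hi1, Fin.ext_iff]
  set X : Matrix (Fin d) (Fin d) ℂ := Matrix.single i0 i1 1 with hXdef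
  have htr : Matrix.trace X = 0 := Matrix.trace_single_eq_of_ne i0 i1 1 h01
  -- scalar equations
  have key : ∀ i : Fin (n + 2),
      (∑ k ∈ Finset.Icc 1 (n + 1), η k * (1 - p i) ^ k) = 1 := by
    intro i
    have h := hmain i X
    rw [dep_traceless d 1 X htr] at h
    simp only [Complex.ofReal_one, sub_self, zero_smul, smul_zero, zero_add] at h
    have h2 : (∑ k ∈ Finset.Icc 1 (n + 1),
        ((η k * (1 - p i) ^ k : ℝ) : ℂ) • X) = X := by
      refine Eq.trans (Finset.sum_congr rfl fun k _ => ?_) h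
      rw [dep_iter_traceless d (p i) X htr, ← algebraMap_smul ℂ (η k), smul_smul]
      congr 1
      push_cast [Complex.coe_algebraMap]
      ring
    have h3 : ((∑ k ∈ Finset.Icc 1 (n + 1), (η k * (1 - p i) ^ k) : ℝ) : ℂ) • X
        = (1 : ℂ) • X := by
      push_cast
      rw [Finset.sum_smul]
      simpa using h2
    have hXne : X ≠ 0 := by
      intro hc
      have := congrFun (congrFun hc i0) i1
      simp [hXdef, Matrix.single] at this
    have := smul_left_injective ℂ hXne (h3)
    exact_mod_cast this
  -- polynomial
  set P : ℝ[X] := (∑ k ∈ Finset.Icc 1 (n + 1), C (η k) * Polynomial.X ^ k) - 1 with hP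
  have hevalr : ∀ i : Fin (n + 2), P.eval (1 - p i) = 0 := by
    intro i
    simp [hP, eval_finset_sum, key i]
  have hfinj : Function.Injective (fun i : Fin (n + 2) => 1 - p i) := by
    intro a b hab
    have h' : 1 - p a = 1 - p b := hab
    exact hinj (by linarith)
  have hdeg : P.natDegree < Fintype.card (Fin (n + 2)) := by
    have h1 : (∑ k ∈ Finset.Icc 1 (n + 1), C (η k) * Polynomial.X ^ k).natDegree ≤ n + 1 := by
      refine Polynomial.natDegree_sum_le_of_forall_le _ _ fun k hk => ?_
      refine (Polynomial.natDegree_C_mul_le _ _).trans ?_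
      simpa using (Finset.mem_Icc.mp hk).2
    have := (Polynomial.natDegree_sub_le _ 1).trans (by simpa using h1)
    simp only [Fintype.card_fin]; exact Nat.lt_succ_of_le this
  have hP0 : P = 0 :=
    Polynomial.eq_zero_of_natDegree_lt_card_of_eval_eq_zero P hfinj hevalr hdeg
  have : P.eval 0 = 0 := by rw [hP0]; simp
  rw [hP] at this
  simp only [Polynomial.eval_sub, Polynomial.eval_one, Polynomial.eval_finset_sum,
    Polynomial.eval_mul, Polynomial.eval_C, Polynomial.eval_pow, Polynomial.eval_X] at this
  have hz : (∑ x ∈ Finset.Icc 1 (n + 1), η x * (0 : ℝ) ^ x) = 0 :=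
    Finset.sum_eq_zero fun x hx => by
      have h1 := (Finset.mem_Icc.mp hx).1
      simp [zero_pow (by omega : x ≠ 0)]
  rw [hz] at this
  norm_num at this
end

section
/- For every n ≥ 1 and every choice of pairwise distinct p_1, …, p_{n+2} ∈ [0,1), there do NOT exist real numbers α_0, …, α_n such that for every i ∈ {1,…,n+2}: Σ_{k=0}^{n} (1−p_i)^{n−k} · p_i^{k} · α_k = 1/(1−p_i). -/
open Polynomial

/-- **no-go, reduced form.** For every `n ≥ 1` and pairwise distinct
`p_1, …, p_{n+2} ∈ [0,1)`, there do NOT exist reals `α_0, …, α_n` with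
`Σ_{k=0}^{n} (1−p_i)^{n−k} p_i^k α_k = 1/(1−p_i)` for every `i = 1, …, n+2`. -/
theorem stmt3 (n : ℕ) (hn : 1 ≤ n) (p : Fin (n + 2) → ℝ)
    (hp : ∀ i, p i ∈ Set.Ico (0 : ℝ) 1) (hinj : Function.Injective p) :
    ¬ ∃ α : Fin (n + 1) → ℝ, ∀ i : Fin (n + 2),
      ∑ k : Fin (n + 1), (1 - p i) ^ (n - (k : ℕ)) * (p i) ^ (k : ℕ) * α k
        = 1 / (1 - p i) := by
  rintro ⟨α, hα⟩
  set P : ℝ[X] :=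
    (∑ k : Fin (n + 1), C (α k) * (1 - X) ^ (n + 1 - (k : ℕ)) * X ^ (k : ℕ)) - 1 with hP
  have hdeg : P.natDegree < n + 2 := by
    have h1 : P.natDegree ≤ n + 1 := by
      apply le_trans (natDegree_sub_le _ _)
      simp only [natDegree_one, max_le_iff]
      constructor
      · apply le_trans (natDegree_sum_le _ _)
        apply Finset.sup_le
        intro k _
        apply le_trans (natDegree_mul_le)
        apply le_trans (add_le_add natDegree_mul_le le_rfl)
        simp only [natDegree_C, natDegree_X_pow, zero_add]
        have h1X : ((1 : ℝ[X]) - X).natDegree ≤ 1 := by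
          apply le_trans (natDegree_sub_le _ _); simp
        calc (((1 : ℝ[X]) - X) ^ (n + 1 - (k : ℕ))).natDegree + (k : ℕ)
            ≤ (n + 1 - (k : ℕ)) * ((1 : ℝ[X]) - X).natDegree + (k : ℕ) :=
              add_le_add natDegree_pow_le le_rfl
          _ ≤ (n + 1 - (k : ℕ)) * 1 + (k : ℕ) :=
              add_le_add (Nat.mul_le_mul_left _ h1X) le_rfl
          _ ≤ n + 1 := by omega
      · omega
    omega
  have heval : ∀ i, P.eval (p i) = 0 := by
    intro i
    have hne : (1 : ℝ) - p i ≠ 0 := by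
      have := (hp i).2; linarith
    have hkey := hα i
    have : P.eval (p i) = (1 - p i) *
        (∑ k : Fin (n + 1), (1 - p i) ^ (n - (k : ℕ)) * (p i) ^ (k : ℕ) * α k) - 1 := by
      simp only [hP, eval_sub, eval_one, eval_finset_sum, eval_mul, eval_pow, eval_C, eval_X,
        eval_sub, eval_one, Finset.mul_sum]
      congr 1
      apply Finset.sum_congr rfl
      intro k _
      have hk : (k : ℕ) ≤ n := Nat.lt_succ_iff.mp k.isLt
      have : n + 1 - (k : ℕ) = (n - (k : ℕ)) + 1 := by omega
      rw [this, pow_succ]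
      ring
    rw [this, hkey, mul_one_div, div_self hne, sub_self]
  have hP0 : P = 0 :=
    eq_zero_of_natDegree_lt_card_of_eval_eq_zero P hinj heval
      (by simpa using hdeg)
  have : P.eval 1 = -1 := by
    simp only [hP, eval_sub, eval_one, eval_finset_sum, eval_mul, eval_pow, eval_C, eval_X,
      sub_self]
    have : ∀ k : Fin (n + 1), α k * (0 : ℝ) ^ (n + 1 - (k : ℕ)) * (1 : ℝ) ^ (k : ℕ) = 0 := by
      intro k
      have hk : (k : ℕ) ≤ n := Nat.lt_succ_iff.mp k.isLt
      rw [zero_pow (by omega)]; ring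
    rw [Finset.sum_congr rfl (fun k _ => this k)]
    simp
  rw [hP0] at this
  simp at this
end

section
/- Let p_1, p_2 ∈ [0,1) be distinct and let q ∈ (0,1]. There do not exist nonnegative real numbers α_1, α_2, β_1, β_2 with α_1 + α_2 ≤ 1 and β_1 + β_2 ≤ 1 such that for both i = 1 and i = 2: (1−p_i)·α_1 + p_i·β_1 = q/(1−p_i) and (1−p_i)·α_2 + p_i·β_2 = −p_i·q/(1−p_i). (This is the reduced form of the paper's claim that no 1-slot quantum comb can reverse two distinct depolarizing channels even probabilistically.) -/
/-- For distinct `p₁, p₂ ∈ [0,1)` and `q ∈ (0,1]`, there are no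
nonnegative reals `α₁, α₂, β₁, β₂` with `α₁+α₂ ≤ 1`, `β₁+β₂ ≤ 1` satisfying, for both
`i = 1, 2`: `(1−p_i)α₁ + p_i β₁ = q/(1−p_i)` and `(1−p_i)α₂ + p_i β₂ = −p_i q/(1−p_i)`. -/
theorem stmt4 (p₁ p₂ q : ℝ) (hp₁ : p₁ ∈ Set.Ico (0 : ℝ) 1)
    (hp₂ : p₂ ∈ Set.Ico (0 : ℝ) 1) (hne : p₁ ≠ p₂) (hq : q ∈ Set.Ioc (0 : ℝ) 1) :
    ¬ ∃ α₁ α₂ β₁ β₂ : ℝ, 0 ≤ α₁ ∧ 0 ≤ α₂ ∧ 0 ≤ β₁ ∧ 0 ≤ β₂ ∧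
      α₁ + α₂ ≤ 1 ∧ β₁ + β₂ ≤ 1 ∧
      ∀ p ∈ ({p₁, p₂} : Set ℝ),
        (1 - p) * α₁ + p * β₁ = q / (1 - p) ∧
        (1 - p) * α₂ + p * β₂ = -p * q / (1 - p) := by
  rintro ⟨α₁, α₂, β₁, β₂, hα₁, hα₂, hβ₁, hβ₂, _, _, h⟩
  -- pick p in {p₁, p₂} with p > 0
  obtain ⟨p, hpmem, hp0, hp1⟩ : ∃ p ∈ ({p₁, p₂} : Set ℝ), 0 < p ∧ p < 1 := by
    rcases lt_or_eq_of_le hp₁.1 with h1 | h1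
    · exact ⟨p₁, Or.inl rfl, h1, hp₁.2⟩
    · refine ⟨p₂, Or.inr rfl, ?_, hp₂.2⟩
      rcases lt_or_eq_of_le hp₂.1 with h2 | h2
      · exact h2
      · exact absurd (by linarith : p₁ = p₂) hne
  have h2 := (h p hpmem).2
  have hlhs : 0 ≤ (1 - p) * α₂ + p * β₂ :=
    add_nonneg (mul_nonneg (by linarith) hα₂) (mul_nonneg hp0.le hβ₂)
  have hrhs : -p * q / (1 - p) < 0 := by
    apply div_neg_of_neg_of_pos
    · nlinarith [hq.1]
    · linarith
  linarith [h2 ▸ hlhs]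
end

section
/- Let m ≥ 1 and let M_0 ≠ M_1 be invertible real m×m matrices satisfying M_0·e_0 = e_0 and M_1·e_0 = e_0, where e_0 is the first standard basis vector of ℝ^m. For j = 0,1 set v_j = Σ_{a,b} (M_j)_{ab} · e_a ⊗ e_b ∈ ℝ^m ⊗ ℝ^m. Then there exists a real linear map W : ℝ^m → ℝ^m ⊗ ℝ^m ⊗ ℝ^m such that: (i) W(e_0) = e_0 ⊗ e_0 ⊗ e_0, and (ii) for j = 0,1, the composition (M_j ⊗ v_j^T) ∘ W equals the identity on ℝ^m, where M_j ⊗ v_j^T : ℝ^m ⊗ (ℝ^m ⊗ ℝ^m) → ℝ^m maps x ⊗ y to ⟨v_j, y⟩ · M_j x. (This is the coordinate form of the paper's Theorem 3: for any two distinct invertible quantum channels there is a single 1-slot virtual comb that exactly reverses both.) -/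
/-- **coordinate form of Theorem 3.** For distinct invertible real `m×m`
matrices `M₀ ≠ M₁` fixing the first standard basis vector `e₀`, there is a linear map
`W : ℝ^m → ℝ^m ⊗ ℝ^m ⊗ ℝ^m` (tensor factors realized as `Fin m × Fin m × Fin m → ℝ`)
with `W e₀ = e₀ ⊗ e₀ ⊗ e₀` and `(M_j ⊗ v_jᵀ) ∘ W = id` for `j = 0, 1`, where
`v_j = vec(M_j)` and `(M_j ⊗ v_jᵀ)(x ⊗ y) = ⟨v_j, y⟩ · M_j x`. -/
theorem stmt5 (m : ℕ) (hm : 0 < m)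
    (M : Fin 2 → Matrix (Fin m) (Fin m) ℝ)
    (hInv : ∀ j, IsUnit (M j))
    (hne : M 0 ≠ M 1)
    (hTP : ∀ j, (M j).mulVec (Pi.single (⟨0, hm⟩ : Fin m) 1) =
      Pi.single (⟨0, hm⟩ : Fin m) 1) :
    ∃ W : (Fin m → ℝ) →ₗ[ℝ] (Fin m × Fin m × Fin m → ℝ),
      W (Pi.single (⟨0, hm⟩ : Fin m) 1) =
        Pi.single ((⟨0, hm⟩ : Fin m), (⟨0, hm⟩ : Fin m), (⟨0, hm⟩ : Fin m)) 1 ∧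
      ∀ j : Fin 2, ∀ x : Fin m → ℝ, ∀ a : Fin m,
        ∑ b : Fin m, ∑ c : Fin m × Fin m,
          M j a b * M j c.1 c.2 * W x (b, c) = x a := by
  classical
  set z : Fin m := ⟨0, hm⟩ with hz
  set e0 : Fin m → ℝ := Pi.single z 1 with he0
  have hdet : ∀ j, IsUnit (M j).det := fun j =>
    (Matrix.isUnit_iff_isUnit_det _).1 (hInv j)
  set K : Fin 2 → Matrix (Fin m) (Fin m) ℝ := fun j => (M j)⁻¹ with hKdef
  have hMK : ∀ j, M j * K j = 1 := fun j => Matrix.mul_nonsing_inv _ (hdet j)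
  have hKM : ∀ j, K j * M j = 1 := fun j => Matrix.nonsing_inv_mul _ (hdet j)
  set v : Fin 2 → (Fin m × Fin m → ℝ) := fun j c => M j c.1 c.2 with hv
  set E : Fin m × Fin m → ℝ := Pi.single (z, z) 1 with hE
  have hMzz : ∀ j, M j z z = 1 := by
    intro j
    have h := congrFun (hTP j) z
    simpa [Matrix.mulVec, dotProduct, he0, Pi.single_apply] using h
  have hvE : ∀ j, ∑ c : Fin m × Fin m, v j c * E c = 1 := by
    intro j
    simp [hE, hv, Pi.single_apply, hMzz j]
  have hindep : ∀ a b : ℝ, (∀ c : Fin m × Fin m, a * v 0 c + b * v 1 c = 0) →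
      a = 0 ∧ b = 0 := by
    intro a b hab
    have hsum : a + b = 0 := by
      have key : ∑ q : Fin m, (a * M 0 z q + b * M 1 z q) * e0 q = a + b := by
        simp [he0, Pi.single_apply, hMzz]
      have key2 : ∑ q : Fin m, (a * M 0 z q + b * M 1 z q) * e0 q = 0 := by
        apply Finset.sum_eq_zero
        intro q _
        have h1 : a * M 0 z q + b * M 1 z q = 0 := by simpa [hv] using hab (z, q)
        rw [h1, zero_mul]
      rw [key2] at key; linarith
    have hb : b = -a := by linarith
    by_cases ha : a = 0
    · exact ⟨ha, by rw [hb, ha]; ring⟩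
    · exfalso
      apply hne
      ext pp qq
      have h1 := hab (pp, qq)
      simp only [hv, hb] at h1
      have h2 : a * (M 0 pp qq - M 1 pp qq) = 0 := by
        linear_combination h1
      rcases mul_eq_zero.1 h2 with h | h
      · exact absurd h ha
      · linarith
  set A : ℝ := ∑ c : Fin m × Fin m, v 0 c * v 0 c with hA
  set B : ℝ := ∑ c : Fin m × Fin m, v 0 c * v 1 c with hB
  set C : ℝ := ∑ c : Fin m × Fin m, v 1 c * v 1 c with hC
  set D : ℝ := A * C - B * B with hD
  have hDne : D ≠ 0 := by
    intro hD0
    set w : Fin m × Fin m → ℝ := fun c => C * v 0 c - B * v 1 c with hw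
    have hwsq : ∑ c : Fin m × Fin m, w c * w c = C * D := by
      simp only [hw, hD]
      have expand : ∀ c : Fin m × Fin m,
          (C * v 0 c - B * v 1 c) * (C * v 0 c - B * v 1 c) =
          C * C * (v 0 c * v 0 c) - 2 * C * B * (v 0 c * v 1 c)
            + B * B * (v 1 c * v 1 c) := by intro c; ring
      rw [Finset.sum_congr rfl (fun c _ => expand c)]
      rw [Finset.sum_add_distrib, Finset.sum_sub_distrib]
      rw [← Finset.mul_sum, ← Finset.mul_sum, ← Finset.mul_sum]
      rw [← hA, ← hB, ← hC]
      ring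
    rw [hD0, mul_zero] at hwsq
    have hw0 : ∀ c : Fin m × Fin m, w c = 0 := by
      intro c
      have hnn : ∀ c' ∈ Finset.univ, (0:ℝ) ≤ w c' * w c' := fun c' _ => mul_self_nonneg _
      exact mul_self_eq_zero.1
        ((Finset.sum_eq_zero_iff_of_nonneg hnn).1 hwsq c (Finset.mem_univ c))
    have hCB : C = 0 ∧ -B = 0 := by
      apply hindep
      intro c
      have := hw0 c
      simp only [hw] at this
      linarith
    have hC0 : (∑ c : Fin m × Fin m, v 1 c * v 1 c) = 0 := by rw [← hC]; exact hCB.1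
    have hv10 : ∀ c : Fin m × Fin m, v 1 c = 0 := by
      intro c
      have hnn : ∀ c' ∈ Finset.univ, (0:ℝ) ≤ v 1 c' * v 1 c' := fun c' _ => mul_self_nonneg _
      exact mul_self_eq_zero.1
        ((Finset.sum_eq_zero_iff_of_nonneg hnn).1 hC0 c (Finset.mem_univ c))
    have : (0:ℝ) = 0 ∧ (1:ℝ) = 0 := by
      apply hindep
      intro c
      simp [hv10 c]
    exact one_ne_zero this.2
  set u1 : Fin m × Fin m → ℝ := fun c => (A * v 1 c - B * v 0 c) / D with hu1
  have hdot01 : ∑ c : Fin m × Fin m, v 0 c * u1 c = 0 := by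
    simp only [hu1]
    have h1 : ∀ c : Fin m × Fin m, v 0 c * ((A * v 1 c - B * v 0 c) / D) =
        (A * (v 0 c * v 1 c) - B * (v 0 c * v 0 c)) / D := by
      intro c; field_simp
    rw [Finset.sum_congr rfl (fun c _ => h1 c)]
    rw [← Finset.sum_div, Finset.sum_sub_distrib, ← Finset.mul_sum, ← Finset.mul_sum,
      ← hA, ← hB]
    field_simp
    ring
  have hdot11 : ∑ c : Fin m × Fin m, v 1 c * u1 c = 1 := by
    simp only [hu1]
    have h1 : ∀ c : Fin m × Fin m, v 1 c * ((A * v 1 c - B * v 0 c) / D) =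
        (A * (v 1 c * v 1 c) - B * (v 0 c * v 1 c)) / D := by
      intro c; field_simp
    rw [Finset.sum_congr rfl (fun c _ => h1 c)]
    rw [← Finset.sum_div, Finset.sum_sub_distrib, ← Finset.mul_sum, ← Finset.mul_sum,
      ← hB, ← hC]
    rw [div_eq_one_iff_eq hDne, hD]
  set p0 : Fin m × Fin m → ℝ := fun c => E c - u1 c with hp0
  have hdot00 : ∑ c : Fin m × Fin m, v 0 c * p0 c = 1 := by
    simp only [hp0, mul_sub, Finset.sum_sub_distrib]
    rw [hvE 0, hdot01]; norm_num
  have hdot10 : ∑ c : Fin m × Fin m, v 1 c * p0 c = 0 := by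
    simp only [hp0, mul_sub, Finset.sum_sub_distrib]
    rw [hvE 1, hdot11]; norm_num
  have hKe0 : ∀ j, (K j).mulVec e0 = e0 := by
    intro j
    calc (K j).mulVec e0 = (K j).mulVec ((M j).mulVec e0) := by rw [hTP j]
      _ = (K j * M j).mulVec e0 := by rw [Matrix.mulVec_mulVec]
      _ = e0 := by rw [hKM j, Matrix.one_mulVec]
  refine ⟨⟨⟨fun x bc => (K 0).mulVec x bc.1 * p0 bc.2 + (K 1).mulVec x bc.1 * u1 bc.2, ?_⟩, ?_⟩, ?_, ?_⟩
  · intro x y; funext bc; simp [Matrix.mulVec_add]; ring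
  · intro r x; funext bc; simp [Matrix.mulVec_smul]; ring
  · funext bc
    obtain ⟨b, c⟩ := bc
    simp only [LinearMap.coe_mk, AddHom.coe_mk]
    rw [hKe0 0, hKe0 1]
    have hsum : e0 b * p0 c + e0 b * u1 c = e0 b * E c := by
      simp only [hp0]; ring
    rw [hsum]
    obtain ⟨c1, c2⟩ := c
    simp only [he0, hE, Pi.single_apply, Prod.mk.injEq]
    by_cases hb : b = z <;> by_cases hc1 : c1 = z <;> by_cases hc2 : c2 = z <;>
      simp [hb, hc1, hc2]
  · intro j x a
    simp only [LinearMap.coe_mk, AddHom.coe_mk]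
    have step1 : ∀ s t : ℝ, ∀ b : Fin m,
        ∑ c : Fin m × Fin m, M j a b * M j c.1 c.2 *
          ((K 0).mulVec x b * p0 c + (K 1).mulVec x b * u1 c) =
        M j a b * ((K 0).mulVec x b * (∑ c : Fin m × Fin m, v j c * p0 c)
          + (K 1).mulVec x b * (∑ c : Fin m × Fin m, v j c * u1 c)) := by
      intro s t b
      have expand : ∀ c : Fin m × Fin m,
          M j a b * M j c.1 c.2 *
            ((K 0).mulVec x b * p0 c + (K 1).mulVec x b * u1 c) =
          (M j a b * (K 0).mulVec x b) * (v j c * p0 c)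
            + (M j a b * (K 1).mulVec x b) * (v j c * u1 c) := by
        intro c; simp only [hv]; ring
      rw [Finset.sum_congr rfl (fun c _ => expand c), Finset.sum_add_distrib,
        ← Finset.mul_sum, ← Finset.mul_sum]
      ring
    rw [Finset.sum_congr rfl (fun b _ => step1 0 0 b)]
    have hfinal : ∀ jj : Fin 2,
        (∑ b : Fin m, M jj a b * (K jj).mulVec x b) = x a := by
      intro jj
      have h1 : ∑ b : Fin m, M jj a b * (K jj).mulVec x b =
          (M jj * K jj).mulVec x a := by
        rw [← Matrix.mulVec_mulVec]; rfl
      rw [h1, hMK jj, Matrix.one_mulVec]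
    fin_cases j <;> simp only [Fin.mk_zero, Fin.mk_one, Fin.isValue]
    · rw [hdot00, hdot01]
      have h2 : ∀ b : Fin m,
          M 0 a b * ((K 0).mulVec x b * 1 + (K 1).mulVec x b * 0) =
          M 0 a b * (K 0).mulVec x b := by intro b; ring
      rw [Finset.sum_congr rfl (fun b _ => h2 b)]
      exact hfinal 0
    · rw [hdot10, hdot11]
      have h2 : ∀ b : Fin m,
          M 1 a b * ((K 0).mulVec x b * 0 + (K 1).mulVec x b * 1) =
          M 1 a b * (K 1).mulVec x b := by intro b; ring
      rw [Finset.sum_congr rfl (fun b _ => h2 b)]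
      exact hfinal 1
end

section
/- Let m ≥ 1 and k ≥ 1, let M_0 and M_1 be invertible real m×m matrices, and let v_0, v_1 ∈ ℝ^k be linearly independent. Then there exists a real linear map W : ℝ^m → ℝ^m ⊗ ℝ^k such that for both j = 0 and j = 1, the composition (M_j ⊗ v_j^T) ∘ W equals the identity on ℝ^m, where M_j ⊗ v_j^T : ℝ^m ⊗ ℝ^k → ℝ^m maps x ⊗ y to ⟨v_j, y⟩ · M_j x. -/
open Matrix in
lemma stmt7_dual_exists (k : ℕ) (v : Fin 2 → (Fin k → ℝ)) (hv : LinearIndependent ℝ v) :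
    ∃ u : Fin 2 → (Fin k → ℝ), ∀ i j, ∑ c, v i c * u j c = if i = j then 1 else 0 := by
  set A : Matrix (Fin 2) (Fin k) ℝ := Matrix.of v with hA
  set G : Matrix (Fin 2) (Fin 2) ℝ := A * Aᵀ with hG
  have hGsymm : Gᵀ = G := by rw [hG, Matrix.transpose_mul, Matrix.transpose_transpose]
  have hAinj : Function.Injective A.vecMul := by
    rw [Matrix.vecMul_injective_iff]; exact hv
  have hker : ∀ x : Fin 2 → ℝ, G.vecMul x = 0 → x = 0 := by
    intro x hx
    have h1 : dotProduct (x ᵥ* A) (x ᵥ* A) = 0 := by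
      have h0 : x ⬝ᵥ (A *ᵥ (x ᵥ* A)) = 0 := by
        have h2 : A *ᵥ (x ᵥ* A) = x ᵥ* G := by
          rw [← Matrix.mulVec_transpose, Matrix.mulVec_mulVec, ← hG, ← hGsymm,
            Matrix.mulVec_transpose, hGsymm]
        rw [h2, hx, dotProduct_zero]
      rwa [Matrix.dotProduct_mulVec] at h0
    have h3 := dotProduct_self_eq_zero.mp h1
    apply hAinj
    simpa using h3
  have hGunit : IsUnit G := by
    rw [← Matrix.vecMul_injective_iff_isUnit]
    intro x y hxy
    have hz : (x - y) ᵥ* G = 0 := by simp [Matrix.sub_vecMul, hxy]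
    exact sub_eq_zero.mp (hker _ hz)
  refine ⟨fun j => (G⁻¹ * A) j, fun i j => ?_⟩
  have hinv : G * G⁻¹ = 1 := Matrix.mul_nonsing_inv _ ((Matrix.isUnit_iff_isUnit_det _).mp hGunit)
  have : ∑ c, v i c * (G⁻¹ * A) j c = (A * (G⁻¹ * A)ᵀ) i j := by
    simp only [Matrix.mul_apply, Matrix.transpose_apply, Finset.mul_sum]
    rfl
  rw [this, Matrix.transpose_mul, ← Matrix.mul_assoc, ← hG,
    Matrix.transpose_nonsing_inv, hGsymm, hinv, Matrix.one_apply]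

lemma stmt7_swap4 {β γ δ ε : Type*} [Fintype β] [Fintype γ] [Fintype δ] [Fintype ε]
    (f : β → γ → δ → ε → ℝ) :
    ∑ b, ∑ c, ∑ j, ∑ a, f b c j a = ∑ j, ∑ c, ∑ a, ∑ b, f b c j a :=
  calc ∑ b, ∑ c, ∑ j, ∑ a, f b c j a
      = ∑ c, ∑ b, ∑ j, ∑ a, f b c j a := Finset.sum_comm
    _ = ∑ c, ∑ j, ∑ b, ∑ a, f b c j a := Finset.sum_congr rfl fun _ _ => Finset.sum_comm
    _ = ∑ j, ∑ c, ∑ b, ∑ a, f b c j a := Finset.sum_comm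
    _ = ∑ j, ∑ c, ∑ a, ∑ b, f b c j a :=
        Finset.sum_congr rfl fun _ _ => Finset.sum_congr rfl fun _ _ => Finset.sum_comm

/-- **Corollary S2.** For invertible real `m×m` matrices `M₀, M₁` and
linearly independent `v₀, v₁ ∈ ℝ^k`, there is a linear map `W : ℝ^m → ℝ^m ⊗ ℝ^k`
(the tensor product realized as `Fin m × Fin k → ℝ`) with `(M_j ⊗ v_jᵀ) ∘ W = id`
for both `j = 0, 1`, where `(M_j ⊗ v_jᵀ)(x ⊗ y) = ⟨v_j, y⟩ · M_j x`. -/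
theorem stmt7 (m k : ℕ) (hm : 1 ≤ m) (hk : 1 ≤ k)
    (M : Fin 2 → Matrix (Fin m) (Fin m) ℝ) (hM : ∀ j, IsUnit (M j))
    (v : Fin 2 → (Fin k → ℝ)) (hv : LinearIndependent ℝ v) :
    ∃ W : (Fin m → ℝ) →ₗ[ℝ] (Fin m × Fin k → ℝ),
      ∀ j : Fin 2, ∀ x : Fin m → ℝ, ∀ a : Fin m,
        ∑ b : Fin m, ∑ c : Fin k, M j a b * v j c * W x (b, c) = x a := by
  obtain ⟨u, hu⟩ := stmt7_dual_exists k v hv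
  set N : Fin 2 → Matrix (Fin m) (Fin m) ℝ := fun j => (M j)⁻¹ with hN
  have hMN : ∀ j, M j * N j = 1 := fun j =>
    Matrix.mul_nonsing_inv _ ((Matrix.isUnit_iff_isUnit_det _).mp (hM j))
  set B : Matrix (Fin m × Fin k) (Fin m) ℝ :=
    fun p a => ∑ j', N j' p.1 a * u j' p.2 with hB
  refine ⟨B.mulVecLin, fun j x a => ?_⟩
  have hW : ∀ b c, B.mulVecLin x (b, c) = ∑ j' : Fin 2, ∑ a', N j' b a' * u j' c * x a' := by
    intro b c
    change (B.mulVec x) (b, c) = _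
    simp only [Matrix.mulVecLin_apply, Matrix.mulVec, dotProduct, hB, Finset.sum_mul]
    rw [Finset.sum_comm]
  calc ∑ b, ∑ c, M j a b * v j c * B.mulVecLin x (b, c)
      = ∑ b, ∑ c, ∑ j' : Fin 2, ∑ a', M j a b * v j c * (N j' b a' * u j' c * x a') := by
        refine Finset.sum_congr rfl fun b _ => Finset.sum_congr rfl fun c _ => ?_
        rw [hW, Finset.mul_sum]
        exact Finset.sum_congr rfl fun j' _ => by rw [Finset.mul_sum]
    _ = ∑ j' : Fin 2, ∑ c, ∑ a', ∑ b, M j a b * v j c * (N j' b a' * u j' c * x a') :=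
        stmt7_swap4 _
    _ = ∑ j' : Fin 2, (if j = j' then 1 else 0) * ∑ a', (M j * N j') a a' * x a' := by
        refine Finset.sum_congr rfl fun j' _ => ?_
        rw [← hu j j', Finset.sum_mul]
        refine Finset.sum_congr rfl fun c _ => ?_
        rw [Finset.mul_sum]
        refine Finset.sum_congr rfl fun a' _ => ?_
        rw [Matrix.mul_apply, Finset.sum_mul, Finset.mul_sum]
        exact Finset.sum_congr rfl fun b _ => by ring
    _ = ∑ a', (M j * N j) a a' * x a' := by
        simp [Finset.sum_ite_eq]
    _ = x a := by
        rw [hMN]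
        simp [Matrix.one_apply]
end

section
/- Let 0 ≤ p_1 < p_2 < 1. There exists a constant C > 0, depending only on p_1 and p_2, such that for every n ≥ 1, setting x_k = p_1 + k·(p_2 − p_1)/n for k = 0, 1, …, n, one has sup_{p ∈ [p_1, p_2]} Π_{k=0}^{n} |p − x_k| / (1 − x_k) ≤ C/n. (This is the quantitative core of the paper's Theorem 4: the minimum worst-case error of approximately reversing a depolarizing channel with unknown noise parameter p ∈ [p_1,p_2] using an n-slot virtual comb decays at least as O(n^{−1}).) -/
lemma aux1 (m : ℕ) : ∏ k ∈ Finset.range m, (m - k) = Nat.factorial m := by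
  rw [← Finset.prod_range_reflect, ← Finset.prod_range_add_one_eq_factorial]
  apply Finset.prod_congr rfl
  intro k hk
  simp only [Finset.mem_range] at hk
  omega

lemma aux2 (j n : ℕ) (hj : j ≤ n) :
    ∏ k ∈ Finset.range (n+1), (if k ≤ j then j + 1 - k else k - j) =
      Nat.factorial (j+1) * Nat.factorial (n - j) := by
  rw [← Finset.prod_range_mul_prod_Ico _ (show j+1 ≤ n+1 by omega)]
  congr 1
  · rw [← aux1 (j+1)]
    apply Finset.prod_congr rfl
    intro k hk; simp only [Finset.mem_range] at hk
    rw [if_pos (by omega)]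
  · rw [Finset.prod_Ico_eq_prod_range, ← Finset.prod_range_add_one_eq_factorial]
    have : n + 1 - (j+1) = n - j := by omega
    rw [this]
    apply Finset.prod_congr rfl
    intro k hk
    rw [if_neg (by omega)]
    omega

lemma aux3 (n : ℕ) : ∏ k ∈ Finset.range n, ((n : ℝ) - k) = Nat.factorial n := by
  rw [← aux1 n, Nat.cast_prod]
  apply Finset.prod_congr rfl
  intro k hk; simp only [Finset.mem_range] at hk
  rw [Nat.cast_sub hk.le]

set_option maxHeartbeats 1000000 in
lemma stmt9_aux (p₁ p₂ : ℝ) (h1 : 0 ≤ p₁) (h12 : p₁ < p₂) (h2 : p₂ < 1) :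
    ∃ C : ℝ, 0 < C ∧ ∀ n : ℕ, 1 ≤ n → ∀ p ∈ Set.Icc p₁ p₂,
      (∏ k ∈ Finset.range (n + 1),
        |p - (p₁ + (k : ℝ) * (p₂ - p₁) / (n : ℝ))| /
          (1 - (p₁ + (k : ℝ) * (p₂ - p₁) / (n : ℝ)))) ≤ C / (n : ℝ) := by
  set d := p₂ - p₁ with hdd
  have hd0 : 0 < d := sub_pos.mpr h12
  set δ := 1 - p₂ with hδδ
  have hδ0 : 0 < δ := sub_pos.mpr h2
  set ε := δ / d with hεε
  have hε0 : 0 < ε := div_pos hδ0 hd0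
  refine ⟨2 / ε ^ 2, by positivity, ?_⟩
  intro n hn p hp
  have hn0 : (0:ℝ) < n := by exact_mod_cast hn
  have hn1 : (1:ℝ) ≤ n := by exact_mod_cast hn
  set h := d / (n:ℝ) with hhh
  have hh0 : 0 < h := div_pos hd0 hn0
  obtain ⟨hp1, hp2⟩ := hp
  have hnh : (n:ℝ) * h = d := by
    rw [hhh]; field_simp
  have hnhε : (n:ℝ) * ε * h = δ := by
    rw [hεε, hhh]
    field_simp
  -- choose the interval index j
  obtain ⟨j, hjn, hxj, hpj1⟩ :
      ∃ j : ℕ, j ≤ n ∧ p₁ + (j:ℝ) * h ≤ p ∧ p ≤ p₁ + ((j:ℝ)+1) * h := by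
    set t := (p - p₁) / h with htt
    have ht0 : 0 ≤ t := div_nonneg (by linarith) hh0.le
    have htp : t * h = p - p₁ := by
      rw [htt]; exact div_mul_cancel₀ _ hh0.ne'
    refine ⟨min n ⌊t⌋₊, min_le_left _ _, ?_, ?_⟩
    · have h1' : ((min n ⌊t⌋₊ : ℕ):ℝ) ≤ ⌊t⌋₊ := by exact_mod_cast min_le_right n ⌊t⌋₊
      have h2' : (⌊t⌋₊ : ℝ) ≤ t := Nat.floor_le ht0
      nlinarith
    · rcases le_or_gt ⌊t⌋₊ n with hc | hc
      · have hjt : ((min n ⌊t⌋₊ : ℕ):ℝ) = ⌊t⌋₊ := by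
          exact_mod_cast congrArg (Nat.cast (R := ℝ)) (min_eq_right hc)
        have h3' : t < ((min n ⌊t⌋₊ : ℕ):ℝ) + 1 := by
          rw [hjt]; exact Nat.lt_floor_add_one t
        nlinarith
      · have hjt : ((min n ⌊t⌋₊ : ℕ):ℝ) = n := by
          exact_mod_cast congrArg (Nat.cast (R := ℝ)) (min_eq_left hc.le)
        rw [hjt]; nlinarith
  have hden : ∀ k : ℕ, 1 - (p₁ + (k:ℝ) * d / n) = h * (((n:ℝ) - k) + n * ε) := by
    intro k
    have e1 : (k:ℝ) * d / n = k * h := by rw [hhh]; ring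
    have e2 : h * (((n:ℝ) - k) + n * ε) = (n:ℝ)*h - k*h + (n:ℝ)*ε*h := by ring
    rw [e1, e2, hnh, hnhε, hδδ, hdd]; ring
  have hDpos : ∀ k ∈ Finset.range (n+1), 0 < ((n:ℝ) - k) + n * ε := by
    intro k hk
    simp only [Finset.mem_range] at hk
    have hkn : (k:ℝ) ≤ n := by exact_mod_cast Nat.lt_succ_iff.mp hk
    nlinarith
  have hfac : ∀ k ∈ Finset.range (n+1),
      |p - (p₁ + (k:ℝ) * d / n)| / (1 - (p₁ + (k:ℝ) * d / n)) ≤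
        (((if k ≤ j then j + 1 - k else k - j : ℕ)) : ℝ) / (((n:ℝ) - k) + n * ε) := by
    intro k hk
    have hD := hDpos k hk
    have hkd : (k:ℝ) * d / n = k * h := by rw [hhh]; ring
    have hnum : |p - (p₁ + (k:ℝ) * h)| ≤
        h * (((if k ≤ j then j + 1 - k else k - j : ℕ)) : ℝ) := by
      rcases le_or_gt k j with hkj | hkj
      · have hc1 : (((if k ≤ j then j + 1 - k else k - j : ℕ)) : ℝ) = (j:ℝ) + 1 - k := by
          rw [if_pos hkj, Nat.cast_sub (by omega)]
          push_cast; ring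
        have hkj' : (k:ℝ) ≤ j := by exact_mod_cast hkj
        have hm : (k:ℝ) * h ≤ (j:ℝ) * h := mul_le_mul_of_nonneg_right hkj' hh0.le
        have hle : p₁ + (k:ℝ) * h ≤ p := by linarith
        rw [abs_of_nonneg (by linarith), hc1]
        have : h * ((j:ℝ) + 1 - k) = ((j:ℝ)+1) * h - k * h := by ring
        rw [this]
        linarith
      · have hc2 : (((if k ≤ j then j + 1 - k else k - j : ℕ)) : ℝ) = (k:ℝ) - j := by
          rw [if_neg (by omega), Nat.cast_sub (by omega)]
        have hkj' : (j:ℝ) + 1 ≤ k := by exact_mod_cast hkj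
        have hm : ((j:ℝ)+1) * h ≤ (k:ℝ) * h := mul_le_mul_of_nonneg_right hkj' hh0.le
        have hge : p ≤ p₁ + (k:ℝ) * h := by linarith
        rw [abs_of_nonpos (by linarith), hc2]
        have : h * ((k:ℝ) - j) = (k:ℝ) * h - (j:ℝ) * h := by ring
        rw [this]
        linarith
    rw [hden k, hkd]
    calc |p - (p₁ + (k:ℝ) * h)| / (h * (((n:ℝ) - k) + n * ε))
        ≤ (h * (((if k ≤ j then j + 1 - k else k - j : ℕ)) : ℝ)) /
            (h * (((n:ℝ) - k) + n * ε)) :=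
          div_le_div_of_nonneg_right hnum (mul_pos hh0 hD).le
      _ = (((if k ≤ j then j + 1 - k else k - j : ℕ)) : ℝ) / (((n:ℝ) - k) + n * ε) := by
          rw [mul_div_mul_left _ _ hh0.ne']
  -- assemble
  have hfact_pos : (0:ℝ) < Nat.factorial n := by exact_mod_cast Nat.factorial_pos n
  have hB0 : (0:ℝ) < (n:ℝ)*ε*((1+ε)^n * Nat.factorial n) := by positivity
  have hDlow : (n:ℝ)*ε*((1+ε)^n * Nat.factorial n) ≤
      ∏ k ∈ Finset.range (n+1), (((n:ℝ) - k) + n * ε) := by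
    rw [Finset.prod_range_succ]
    have hDn : ((n:ℝ) - n) + n * ε = n * ε := by ring
    rw [hDn, mul_comm ((n:ℝ)*ε) _]
    apply mul_le_mul_of_nonneg_right _ (by positivity)
    calc (1+ε)^n * (Nat.factorial n : ℝ)
        = ∏ k ∈ Finset.range n, ((1+ε) * ((n:ℝ) - k)) := by
          rw [Finset.prod_mul_distrib, Finset.prod_const, Finset.card_range, aux3]
      _ ≤ ∏ k ∈ Finset.range n, (((n:ℝ) - k) + n * ε) := by
          apply Finset.prod_le_prod
          · intro k hk
            simp only [Finset.mem_range] at hk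
            have hkn : (k:ℝ) < n := by exact_mod_cast hk
            exact mul_nonneg (by linarith) (by linarith)
          · intro k hk
            simp only [Finset.mem_range] at hk
            have hkn : (k:ℝ) < n := by exact_mod_cast hk
            have hk0 : (0:ℝ) ≤ k := Nat.cast_nonneg k
            have e : (1+ε) * ((n:ℝ)-k) = ((n:ℝ)-k) + ε*((n:ℝ)-k) := by ring
            have h5 : ε*((n:ℝ)-k) ≤ ε*(n:ℝ) :=
              mul_le_mul_of_nonneg_left (by linarith) hε0.le
            rw [e]
            linarith
  have hA : ((Nat.factorial (j+1) * Nat.factorial (n-j) : ℕ):ℝ) ≤ (Nat.factorial (n+1) : ℝ) := by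
    have hdvd := Nat.factorial_mul_factorial_dvd_factorial_add (j+1) (n-j)
    rw [show j+1+(n-j) = n+1 by omega] at hdvd
    exact_mod_cast Nat.le_of_dvd (Nat.factorial_pos _) hdvd
  have hprod_c : (∏ k ∈ Finset.range (n+1),
      (((if k ≤ j then j + 1 - k else k - j : ℕ)) : ℝ)) =
      ((Nat.factorial (j+1) * Nat.factorial (n-j) : ℕ) : ℝ) := by
    rw [← Nat.cast_prod]
    exact_mod_cast congrArg (Nat.cast (R := ℝ)) (aux2 j n hjn)
  have hG : (n:ℝ)*ε ≤ (1+ε)^n := by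
    have := one_add_mul_le_pow (show (-2:ℝ) ≤ ε by linarith) n
    linarith
  calc (∏ k ∈ Finset.range (n + 1),
        |p - (p₁ + (k : ℝ) * d / (n : ℝ))| / (1 - (p₁ + (k : ℝ) * d / (n : ℝ))))
      ≤ ∏ k ∈ Finset.range (n+1),
          ((((if k ≤ j then j + 1 - k else k - j : ℕ)) : ℝ) / (((n:ℝ) - k) + n * ε)) := by
        apply Finset.prod_le_prod _ hfac
        intro k hk
        have hD := hDpos k hk
        rw [hden k]
        exact div_nonneg (abs_nonneg _) (mul_pos hh0 hD).le
    _ = (∏ k ∈ Finset.range (n+1), (((if k ≤ j then j + 1 - k else k - j : ℕ)) : ℝ)) /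
        (∏ k ∈ Finset.range (n+1), (((n:ℝ) - k) + n * ε)) := Finset.prod_div_distrib _ _
    _ ≤ (∏ k ∈ Finset.range (n+1), (((if k ≤ j then j + 1 - k else k - j : ℕ)) : ℝ)) /
        ((n:ℝ)*ε*((1+ε)^n * Nat.factorial n)) :=
        div_le_div_of_nonneg_left
          (Finset.prod_nonneg fun k _ => Nat.cast_nonneg _) hB0 hDlow
    _ ≤ (Nat.factorial (n+1) : ℝ) / ((n:ℝ)*ε*((1+ε)^n * Nat.factorial n)) := by
        rw [hprod_c]
        exact div_le_div_of_nonneg_right hA hB0.le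
    _ ≤ 2 / ε ^ 2 / n := by
        rw [div_div, div_le_div_iff₀ hB0 (by positivity)]
        have hfs : (Nat.factorial (n+1) : ℝ) = ((n:ℝ)+1) * Nat.factorial n := by
          rw [Nat.factorial_succ]; push_cast; ring
        rw [hfs]
        have key : ((n:ℝ)*ε) * ((n:ℝ)*ε) * Nat.factorial n ≤
            ((n:ℝ)*ε) * (1+ε)^n * Nat.factorial n := by
          apply mul_le_mul_of_nonneg_right _ hfact_pos.le
          exact mul_le_mul_of_nonneg_left hG (by positivity)
        have hint : 0 ≤ (n:ℝ) * ε^2 * Nat.factorial n * ((n:ℝ) - 1) :=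
          mul_nonneg (mul_nonneg (mul_nonneg hn0.le (sq_nonneg ε)) hfact_pos.le)
            (by linarith)
        nlinarith [key, hint]


/-- **quantitative core of Theorem 4.** For `0 ≤ p₁ < p₂ < 1` there is a
constant `C > 0` (depending only on `p₁, p₂`) such that for every `n ≥ 1`, with the
equally spaced nodes `x_k = p₁ + k(p₂−p₁)/n`, `k = 0, …, n`, one has
`Π_{k=0}^{n} |p − x_k|/(1 − x_k) ≤ C/n` for all `p ∈ [p₁, p₂]`. -/
theorem stmt9 (p₁ p₂ : ℝ) (h1 : 0 ≤ p₁) (h12 : p₁ < p₂) (h2 : p₂ < 1) :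
    ∃ C : ℝ, 0 < C ∧ ∀ n : ℕ, 1 ≤ n → ∀ p ∈ Set.Icc p₁ p₂,
      (∏ k ∈ Finset.range (n + 1),
        |p - (p₁ + (k : ℝ) * (p₂ - p₁) / (n : ℝ))| /
          (1 - (p₁ + (k : ℝ) * (p₂ - p₁) / (n : ℝ)))) ≤ C / (n : ℝ) :=
  stmt9_aux p₁ p₂ h1 h12 h2
end

section
/- Let 0 ≤ p_1 < p_2 ≤ 1, let n ≥ 2, and for j = 3, …, n+1 set p_j = p_1 + ((j−2)/n)·(p_2 − p_1). Then Π_{j=3}^{n+1} (p_j − p_1)/(1 − p_j) ≤ 1. -/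
/-- For `0 ≤ p₁ < p₂ ≤ 1`, `n ≥ 2`, and
`p_j = p₁ + ((j−2)/n)(p₂−p₁)` for `j = 3, …, n+1`, one has
`Π_{j=3}^{n+1} (p_j − p₁)/(1 − p_j) ≤ 1`. -/
theorem stmt10 (p₁ p₂ : ℝ) (n : ℕ) (hn : 2 ≤ n)
    (h1 : 0 ≤ p₁) (h12 : p₁ < p₂) (h2 : p₂ ≤ 1) :
    (∏ j ∈ Finset.Icc 3 (n + 1),
      ((p₁ + (((j : ℝ) - 2) / (n : ℝ)) * (p₂ - p₁)) - p₁) /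
        (1 - (p₁ + (((j : ℝ) - 2) / (n : ℝ)) * (p₂ - p₁)))) ≤ 1 := by
  have hd0 : (0:ℝ) < p₂ - p₁ := by linarith
  have had : p₂ - p₁ ≤ 1 - p₁ := by linarith
  have hn0 : (0:ℝ) < n := by positivity
  set d : ℝ := p₂ - p₁ with hd
  set a : ℝ := 1 - p₁ with ha
  set den : ℕ → ℝ := fun j => a - (((j:ℝ) - 2) / n) * d with hden_def
  set num : ℕ → ℝ := fun j => a - (((n:ℝ) + 2 - j) / n) * d with hnum_def
  -- denominator positivity
  have hden : ∀ j ∈ Finset.Icc 3 (n+1), 0 < den j := by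
    intro j hj
    simp only [Finset.mem_Icc] at hj
    have hjr : (j:ℝ) ≤ (n:ℝ) + 1 := by exact_mod_cast hj.2
    have h1' : ((j:ℝ) - 2) / n * d ≤ ((n:ℝ) - 1) / n * d := by
      apply mul_le_mul_of_nonneg_right _ hd0.le
      exact div_le_div_of_nonneg_right (by linarith) hn0.le
    have h2' : ((n:ℝ) - 1) / n * d < d := by
      rw [div_mul_eq_mul_div, div_lt_iff₀ hn0]
      nlinarith
    simp only [hden_def]
    linarith
  -- each factor is bounded by num j / den j
  have key : ∀ j ∈ Finset.Icc 3 (n+1),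
      ((p₁ + (((j : ℝ) - 2) / (n : ℝ)) * (p₂ - p₁)) - p₁) /
        (1 - (p₁ + (((j : ℝ) - 2) / (n : ℝ)) * (p₂ - p₁)))
        ≤ num j / den j := by
    intro j hj
    have hdj := hden j hj
    have hterm : (p₁ + (((j : ℝ) - 2) / (n : ℝ)) * (p₂ - p₁)) - p₁
        = (((j:ℝ) - 2) / n) * d := by rw [hd]; ring
    have hterm2 : 1 - (p₁ + (((j : ℝ) - 2) / (n : ℝ)) * (p₂ - p₁)) = den j := by
      simp only [hden_def, ha, hd]; ring
    rw [hterm, hterm2, div_le_div_iff_of_pos_right hdj]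
    have hsum : (((j:ℝ) - 2) / n) * d + (((n:ℝ) + 2 - j) / n) * d = d := by
      field_simp
      ring
    simp only [hnum_def]
    linarith
  have hnonneg : ∀ j ∈ Finset.Icc 3 (n+1),
      0 ≤ ((p₁ + (((j : ℝ) - 2) / (n : ℝ)) * (p₂ - p₁)) - p₁) /
        (1 - (p₁ + (((j : ℝ) - 2) / (n : ℝ)) * (p₂ - p₁))) := by
    intro j hj
    simp only [Finset.mem_Icc] at hj
    have hj3 : (3:ℝ) ≤ (j:ℝ) := by exact_mod_cast hj.1
    have hdj := hden j (Finset.mem_Icc.mpr hj)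
    have hterm2 : 1 - (p₁ + (((j : ℝ) - 2) / (n : ℝ)) * (p₂ - p₁)) = den j := by
      simp only [hden_def, ha, hd]; ring
    rw [hterm2]
    apply div_nonneg _ hdj.le
    have : 0 ≤ ((j:ℝ) - 2) / n := div_nonneg (by linarith) hn0.le
    nlinarith
  calc (∏ j ∈ Finset.Icc 3 (n + 1),
      ((p₁ + (((j : ℝ) - 2) / (n : ℝ)) * (p₂ - p₁)) - p₁) /
        (1 - (p₁ + (((j : ℝ) - 2) / (n : ℝ)) * (p₂ - p₁))))
      ≤ ∏ j ∈ Finset.Icc 3 (n + 1), num j / den j :=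
        Finset.prod_le_prod hnonneg key
    _ = (∏ j ∈ Finset.Icc 3 (n + 1), num j) / (∏ j ∈ Finset.Icc 3 (n + 1), den j) :=
        Finset.prod_div_distrib _ _
    _ = 1 := by
        have heq : (∏ j ∈ Finset.Icc 3 (n + 1), num j)
            = ∏ j ∈ Finset.Icc 3 (n + 1), den j := by
          apply Finset.prod_nbij' (fun i => n + 4 - i) (fun i => n + 4 - i)
          · intro i hi; simp only [Finset.mem_Icc] at *; omega
          · intro i hi; simp only [Finset.mem_Icc] at *; omega
          · intro i hi; simp only [Finset.mem_Icc] at hi; omega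
          · intro i hi; simp only [Finset.mem_Icc] at hi; omega
          · intro i hi
            simp only [Finset.mem_Icc] at hi
            simp only [hnum_def, hden_def]
            have : ((n + 4 - i : ℕ) : ℝ) = (n:ℝ) + 4 - i := by
              push_cast [Nat.cast_sub (by omega : i ≤ n + 4)]; ring
            rw [this]; ring_nf
        rw [heq]
        apply div_self
        exact (Finset.prod_pos hden).ne'
end

section
/- Let d ≥ 2. For A ∈ M_d(ℂ) write |A⟩⟩ = Σ_{i,j} A_{ij} |i⟩⊗|j⟩ ∈ (ℂ^d)^{⊗2}. On (ℂ^d)^{⊗4} define the permutation operators P_{(13)(24)}|x_1 x_2 x_3 x_4⟩ = |x_3 x_4 x_1 x_2⟩, P_{(13)}|x_1 x_2 x_3 x_4⟩ = |x_3 x_2 x_1 x_4⟩, P_{(24)}|x_1 x_2 x_3 x_4⟩ = |x_1 x_4 x_3 x_2⟩, and set V = P_{(13)(24)} − (1/(d(d²−1)))·P_{(24)} − (1/d)·P_{(13)} + (1/(d²−1))·I. Then for every unitary U ∈ M_d(ℂ): tr_{2,3}[ V · ( I_d ⊗ (|U⟩⟩⟨⟨U|)^T ⊗ I_d ) ] =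 |U†⟩⟩⟨⟨U†|, where (|U⟩⟩⟨⟨U|)^T is the transpose of the operator |U⟩⟩⟨⟨U| placed on tensor factors 2 and 3, the partial trace is over factors 2 and 3, and the result is an operator on factors 1 and 4 identified with ℂ^d ⊗ ℂ^d. (This is the action identity proving the paper's Proposition 5: V is the Choi operator of a 1-slot virtual comb transforming every qudit unitary channel into its inverse.) -/
open Matrix

/-- Index set for `(ℂ^d)^{⊗4}`, factors ordered `1,2,3,4`. -/
abbrev Idx (d : ℕ) := Fin d × Fin d × Fin d × Fin d

/-- The permutation operator `P_{(13)(24)} : |x₁x₂x₃x₄⟩ ↦ |x₃x₄x₁x₂⟩`. -/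
noncomputable def P1324 (d : ℕ) : Matrix (Idx d) (Idx d) ℂ :=
  fun i j =>
    if i.1 = j.2.2.1 ∧ i.2.1 = j.2.2.2 ∧ i.2.2.1 = j.1 ∧ i.2.2.2 = j.2.1 then 1 else 0

/-- The permutation operator `P_{(13)} : |x₁x₂x₃x₄⟩ ↦ |x₃x₂x₁x₄⟩`. -/
noncomputable def P13 (d : ℕ) : Matrix (Idx d) (Idx d) ℂ :=
  fun i j =>
    if i.1 = j.2.2.1 ∧ i.2.1 = j.2.1 ∧ i.2.2.1 = j.1 ∧ i.2.2.2 = j.2.2.2 then 1 else 0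

/-- The permutation operator `P_{(24)} : |x₁x₂x₃x₄⟩ ↦ |x₁x₄x₃x₂⟩`. -/
noncomputable def P24 (d : ℕ) : Matrix (Idx d) (Idx d) ℂ :=
  fun i j =>
    if i.1 = j.1 ∧ i.2.1 = j.2.2.2 ∧ i.2.2.1 = j.2.2.1 ∧ i.2.2.2 = j.2.1 then 1 else 0

/-- Place an operator `X` on `ℂ^d ⊗ ℂ^d` on the tensor factors `2` and `3`:
`I_d ⊗ X ⊗ I_d`. -/
noncomputable def mid23 (d : ℕ) (X : Matrix (Fin d × Fin d) (Fin d × Fin d) ℂ) :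
    Matrix (Idx d) (Idx d) ℂ :=
  fun i j => (if i.1 = j.1 then 1 else 0) * X (i.2.1, i.2.2.1) (j.2.1, j.2.2.1) *
    (if i.2.2.2 = j.2.2.2 then 1 else 0)

/-- Partial trace over the tensor factors `2` and `3`; the result acts on factors
`1` and `4`, identified with `ℂ^d ⊗ ℂ^d`. -/
noncomputable def ptrace23 (d : ℕ) (Z : Matrix (Idx d) (Idx d) ℂ) :
    Matrix (Fin d × Fin d) (Fin d × Fin d) ℂ :=
  fun r c => ∑ s : Fin d, ∑ t : Fin d, Z (r.1, s, t, r.2) (c.1, s, t, c.2)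

/-- `|A⟩⟩⟨⟨A|` for `|A⟩⟩ = Σ_{i,j} A_{ij} |i⟩⊗|j⟩`. -/
noncomputable def ketbra (d : ℕ) (A : Matrix (Fin d) (Fin d) ℂ) :
    Matrix (Fin d × Fin d) (Fin d × Fin d) ℂ :=
  fun r c => A r.1 r.2 * star (A c.1 c.2)

/-- The Choi operator of the universal 1-slot unitary-inversion virtual comb. -/
noncomputable def Vcomb (d : ℕ) : Matrix (Idx d) (Idx d) ℂ :=
  P1324 d - ((1 : ℂ) / ((d : ℂ) * ((d : ℂ) ^ 2 - 1))) • P24 d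
    - ((1 : ℂ) / (d : ℂ)) • P13 d
    + ((1 : ℂ) / ((d : ℂ) ^ 2 - 1)) • (1 : Matrix (Idx d) (Idx d) ℂ)

lemma ptr_P1324 (d : ℕ) (X : Matrix (Fin d × Fin d) (Fin d × Fin d) ℂ) (r c : Fin d × Fin d) :
    ptrace23 d (P1324 d * mid23 d X) r c = X (r.2, r.1) (c.2, c.1) := by
  simp only [ptrace23, Matrix.mul_apply, P1324, mid23, Fintype.sum_prod_type]
  simp [ite_and, Finset.sum_ite_eq, Finset.sum_ite_eq', mul_ite, ite_mul, mul_zero, zero_mul, mul_one, one_mul]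

lemma ptr_P13 (d : ℕ) (X : Matrix (Fin d × Fin d) (Fin d × Fin d) ℂ) (r c : Fin d × Fin d) :
    ptrace23 d (P13 d * mid23 d X) r c =
      (if r.2 = c.2 then 1 else 0) * ∑ s : Fin d, X (s, r.1) (s, c.1) := by
  simp only [ptrace23, Matrix.mul_apply, P13, mid23, Fintype.sum_prod_type]
  simp [ite_and, Finset.sum_ite_eq, Finset.sum_ite_eq', mul_ite, ite_mul, mul_zero, zero_mul, mul_one, one_mul, Finset.mul_sum, Finset.sum_comm]

lemma ptr_P24 (d : ℕ) (X : Matrix (Fin d × Fin d) (Fin d × Fin d) ℂ) (r c : Fin d × Fin d) :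
    ptrace23 d (P24 d * mid23 d X) r c =
      (if r.1 = c.1 then 1 else 0) * ∑ t : Fin d, X (r.2, t) (c.2, t) := by
  simp only [ptrace23, Matrix.mul_apply, P24, mid23, Fintype.sum_prod_type]
  simp [ite_and, Finset.sum_ite_eq, Finset.sum_ite_eq', mul_ite, ite_mul, mul_zero, zero_mul, mul_one, one_mul, Finset.mul_sum, Finset.sum_comm]

lemma ptr_id (d : ℕ) (X : Matrix (Fin d × Fin d) (Fin d × Fin d) ℂ) (r c : Fin d × Fin d) :
    ptrace23 d (mid23 d X) r c =
      (if r.1 = c.1 then 1 else 0) * (if r.2 = c.2 then 1 else 0) *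
        ∑ s : Fin d, ∑ t : Fin d, X (s, t) (s, t) := by
  simp only [ptrace23, mid23]
  rw [Finset.mul_sum]
  congr 1; ext s
  rw [Finset.mul_sum]
  congr 1; ext t
  ring

lemma ptr_lin (d : ℕ) (a b e : ℂ) (A B C D : Matrix (Idx d) (Idx d) ℂ) (r c : Fin d × Fin d) :
    ptrace23 d (A - a • B - b • C + e • D) r c =
      ptrace23 d A r c - a * ptrace23 d B r c - b * ptrace23 d C r c + e * ptrace23 d D r c := by
  simp [ptrace23, Finset.sum_sub_distrib, Finset.sum_add_distrib, Finset.mul_sum]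

/-- **Proposition 5.** For every `d ≥ 2` and every unitary
`U ∈ M_d(ℂ)`: `tr_{2,3}[ V · (I_d ⊗ (|U⟩⟩⟨⟨U|)ᵀ ⊗ I_d) ] = |U†⟩⟩⟨⟨U†|`. -/
theorem stmt12 (d : ℕ) (hd : 2 ≤ d) (U : Matrix (Fin d) (Fin d) ℂ)
    (hU : U ∈ Matrix.unitaryGroup (Fin d) ℂ) :
    ptrace23 d (Vcomb d * mid23 d ((ketbra d U)ᵀ)) = ketbra d Uᴴ := by
  have hUU : U * star U = 1 := (Matrix.mem_unitaryGroup_iff).mp hU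
  have hUU' : star U * U = 1 := (Matrix.mem_unitaryGroup_iff').mp hU
  have hcol : ∀ a b : Fin d, (∑ s : Fin d, star (U s a) * U s b) = if a = b then 1 else 0 := by
    intro a b
    have := congrFun (congrFun hUU' a) b
    simpa [Matrix.mul_apply, Matrix.one_apply, Matrix.star_apply] using this
  have hrow : ∀ a b : Fin d, (∑ t : Fin d, U a t * star (U b t)) = if a = b then 1 else 0 := by
    intro a b
    have := congrFun (congrFun hUU a) b
    simpa [Matrix.mul_apply, Matrix.one_apply, Matrix.star_apply] using this
  have htr : (∑ s : Fin d, ∑ t : Fin d, U s t * star (U s t)) = (d : ℂ) := by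
    have : ∀ s : Fin d, (∑ t : Fin d, U s t * star (U s t)) = 1 := by
      intro s; simpa using hrow s s
    rw [Finset.sum_congr rfl fun s _ => this s]; simp
  have hd0 : (d : ℂ) ≠ 0 := by
    exact_mod_cast Nat.cast_ne_zero.mpr (by omega)
  have hd1 : (d : ℂ) ^ 2 - 1 ≠ 0 := by
    have : ((d : ℂ)) ^ 2 = ((d ^ 2 : ℕ) : ℂ) := by push_cast; ring
    rw [this, sub_ne_zero]
    intro h
    have : (d ^ 2 : ℕ) = 1 := by exact_mod_cast h
    nlinarith
  ext r c
  rw [Vcomb, Matrix.add_mul, Matrix.sub_mul, Matrix.sub_mul, Matrix.smul_mul, Matrix.smul_mul, Matrix.smul_mul, ptr_lin, ptr_P1324, ptr_P13, ptr_P24, Matrix.one_mul, ptr_id]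
  simp only [Matrix.transpose_apply, ketbra, Matrix.conjTranspose_apply, htr]
  have h1 : (∑ s : Fin d, U s c.1 * star (U s r.1)) = if r.1 = c.1 then 1 else 0 := by
    rw [← hcol r.1 c.1]; congr 1; ext s; ring
  have h2 : (∑ t : Fin d, U c.2 t * star (U r.2 t)) = if r.2 = c.2 then 1 else 0 := by
    rw [hrow c.2 r.2]
    by_cases h : r.2 = c.2
    · simp [h]
    · rw [if_neg h, if_neg (fun hh => h hh.symm)]
  rw [h1, h2, star_star]
  by_cases hr : r.1 = c.1 <;> by_cases hc : r.2 = c.2 <;>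
    simp only [hr, hc, if_true, if_false, ite_true, ite_false, mul_one, one_mul,
      mul_zero, zero_mul, sub_zero, add_zero] <;>
    (try field_simp) <;> ring
end

section
/- Let d ≥ 2 and let S ∈ M_{d²}(ℂ) be the swap operator on ℂ^d ⊗ ℂ^d, i.e. S(x⊗y) = y⊗x. Then both Kronecker-product combinations S⊗S − (1/d)·I_{d²}⊗S − (1/d)·S⊗I_{d²} + I_{d⁴} and −S⊗S − (1/d)·I_{d²}⊗S + (1/d)·S⊗I_{d²} + I_{d⁴} are positive semidefinite matrices in M_{d⁴}(ℂ). -/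
open Matrix Kronecker ComplexOrder

/-- The swap operator `S` on `ℂ^d ⊗ ℂ^d`: `S(x ⊗ y) = y ⊗ x`. -/
noncomputable def swapM (d : ℕ) : Matrix (Fin d × Fin d) (Fin d × Fin d) ℂ :=
  fun i j => if i.1 = j.2 ∧ i.2 = j.1 then 1 else 0

lemma smulPSD {n : Type*} [Fintype n] (c : ℝ) (hc : 0 ≤ c) {M : Matrix n n ℂ}
    (hM : M.PosSemidef) : ((c : ℂ) • M).PosSemidef := by
  rw [posSemidef_iff_dotProduct_mulVec]
  constructor
  · show ((c : ℂ) • M)ᴴ = _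
    rw [conjTranspose_smul, hM.1]
    simp [Complex.conj_ofReal]
  · intro x
    rw [smul_mulVec, dotProduct_smul, smul_eq_mul]
    exact mul_nonneg (by exact_mod_cast Complex.zero_le_real.mpr hc) (hM.dotProduct_mulVec_nonneg x)

lemma prodPSD {n : Type*} [Fintype n] [DecidableEq n] {B C : Matrix n n ℂ}
    (hB : Bᴴ = B) (hC : Cᴴ = C) (hB2 : B * B = 1) (hC2 : C * C = 1)
    (hcomm : C * B = B * C) : ((1 + B) * (1 + C)).PosSemidef := by
  have hcomm' : (1 + C) * (1 + B) = (1 + B) * (1 + C) := by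
    have e1 : (1 + C) * (1 + B) = 1 + (B + C + C * B) := by noncomm_ring
    have e2 : (1 + B) * (1 + C) = 1 + (B + C + C * B) := by rw [hcomm]; noncomm_ring
    rw [e1, e2]
  have hH : ((1 + B) * (1 + C))ᴴ = (1 + B) * (1 + C) := by
    rw [conjTranspose_mul, conjTranspose_add, conjTranspose_add, conjTranspose_one, hB, hC,
      hcomm']
  have sqB : (1 + B) * (1 + B) = (2 : ℂ) • (1 + B) := by
    have : (1 + B) * (1 + B) = 1 + B + B + B * B := by noncomm_ring
    rw [this, hB2]
    module
  have sqC : (1 + C) * (1 + C) = (2 : ℂ) • (1 + C) := by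
    have : (1 + C) * (1 + C) = 1 + C + C + C * C := by noncomm_ring
    rw [this, hC2]
    module
  have key : (1 + B) * (1 + C) =
      (((1:ℝ)/4 : ℝ) : ℂ) • (((1 + B) * (1 + C))ᴴ * ((1 + B) * (1 + C))) := by
    rw [hH]
    have : ((1 + B) * (1 + C)) * ((1 + B) * (1 + C))
        = (1 + B) * ((1 + C) * (1 + B)) * (1 + C) := by noncomm_ring
    rw [this, hcomm']
    have : (1 + B) * ((1 + B) * (1 + C)) * (1 + C)
        = ((1 + B) * (1 + B)) * ((1 + C) * (1 + C)) := by noncomm_ring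
    rw [this, sqB, sqC]
    rw [smul_mul_assoc, mul_smul_comm, smul_smul, smul_smul]
    norm_num
  rw [key]
  exact smulPSD _ (by norm_num) (posSemidef_conjTranspose_mul_self _)

lemma swapM_herm (d : ℕ) : (swapM d)ᴴ = swapM d := by
  ext i j
  simp only [conjTranspose_apply, swapM]
  have h : (j.1 = i.2 ∧ j.2 = i.1) ↔ (i.1 = j.2 ∧ i.2 = j.1) :=
    ⟨fun ⟨a, b⟩ => ⟨b.symm, a.symm⟩, fun ⟨a, b⟩ => ⟨b.symm, a.symm⟩⟩
  simp only [h]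
  split_ifs <;> simp

lemma swapM_apply' (d : ℕ) (i k : Fin d × Fin d) :
    swapM d i k = if k = (i.2, i.1) then 1 else 0 := by
  have h : (i.1 = k.2 ∧ i.2 = k.1) ↔ k = (i.2, i.1) := by
    constructor
    · rintro ⟨a, b⟩; exact Prod.ext b.symm a.symm
    · rintro rfl; exact ⟨rfl, rfl⟩
  simp only [swapM, h]

lemma swapM_sq (d : ℕ) : swapM d * swapM d = 1 := by
  ext i j
  rw [mul_apply]
  simp only [swapM_apply' d i, ite_mul, one_mul, zero_mul,
    Finset.sum_ite_eq' Finset.univ ((i.2, i.1)) (fun k => swapM d k j),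
    Finset.mem_univ, if_true]
  have h : ((i.2, i.1) : Fin d × Fin d).1 = j.2 ∧ ((i.2, i.1) : Fin d × Fin d).2 = j.1 ↔
      i = j := ⟨fun ⟨a, b⟩ => Prod.ext b a, fun h => by cases h; exact ⟨rfl, rfl⟩⟩
  simp only [swapM, h, one_apply]

lemma kron_conjT {n m : Type*} (A : Matrix n n ℂ) (B : Matrix m m ℂ) :
    (A ⊗ₖ B)ᴴ = Aᴴ ⊗ₖ Bᴴ := by
  ext i j
  simp [conjTranspose_apply, kroneckerMap_apply, mul_comm]

/-- For `d ≥ 2`, both `S⊗S − (1/d)·I⊗S − (1/d)·S⊗I + I` and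
`−S⊗S − (1/d)·I⊗S + (1/d)·S⊗I + I` are positive semidefinite on `ℂ^{d⁴}`. -/
theorem stmt13 (d : ℕ) (hd : 2 ≤ d) :
    (swapM d ⊗ₖ swapM d
      - ((d : ℂ))⁻¹ • ((1 : Matrix (Fin d × Fin d) (Fin d × Fin d) ℂ) ⊗ₖ swapM d)
      - ((d : ℂ))⁻¹ • (swapM d ⊗ₖ (1 : Matrix (Fin d × Fin d) (Fin d × Fin d) ℂ))
      + 1).PosSemidef ∧
    (-(swapM d ⊗ₖ swapM d)
      - ((d : ℂ))⁻¹ • ((1 : Matrix (Fin d × Fin d) (Fin d × Fin d) ℂ) ⊗ₖ swapM d)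
      + ((d : ℂ))⁻¹ • (swapM d ⊗ₖ (1 : Matrix (Fin d × Fin d) (Fin d × Fin d) ℂ))
      + 1).PosSemidef := by
  set S := swapM d
  set B := (1 : Matrix (Fin d × Fin d) (Fin d × Fin d) ℂ) ⊗ₖ S with hBdef
  set C := S ⊗ₖ (1 : Matrix (Fin d × Fin d) (Fin d × Fin d) ℂ) with hCdef
  have hB : Bᴴ = B := by rw [hBdef, kron_conjT, conjTranspose_one, swapM_herm]
  have hC : Cᴴ = C := by rw [hCdef, kron_conjT, conjTranspose_one, swapM_herm]
  have hB2 : B * B = 1 := by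
    rw [hBdef, ← mul_kronecker_mul, one_mul, swapM_sq, one_kronecker_one]
  have hC2 : C * C = 1 := by
    rw [hCdef, ← mul_kronecker_mul, mul_one, swapM_sq, one_kronecker_one]
  have hSS : S ⊗ₖ S = B * C := by
    rw [hBdef, hCdef, ← mul_kronecker_mul, one_mul, mul_one]
  have hcomm : C * B = B * C := by
    rw [hBdef, hCdef, ← mul_kronecker_mul, ← mul_kronecker_mul, one_mul, mul_one]
  -- scalars
  have hdpos : (0:ℝ) < d := by positivity
  have hinv : (d : ℝ)⁻¹ ≤ 1 := by
    rw [inv_le_one_iff₀]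
    right; exact_mod_cast Nat.one_le_of_lt hd
  have hα : (0:ℝ) ≤ (1 - (d : ℝ)⁻¹) / 2 := by linarith
  have hβ : (0:ℝ) ≤ (1 + (d : ℝ)⁻¹) / 2 := by positivity
  have hcastα : ((((1 - (d : ℝ)⁻¹) / 2 : ℝ)) : ℂ) = (1 - (d : ℂ)⁻¹) / 2 := by push_cast; ring
  have hcastβ : ((((1 + (d : ℝ)⁻¹) / 2 : ℝ)) : ℂ) = (1 + (d : ℂ)⁻¹) / 2 := by push_cast; ring
  have hnegB : (-B)ᴴ = -B := by rw [conjTranspose_neg, hB]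
  have hnegC : (-C)ᴴ = -C := by rw [conjTranspose_neg, hC]
  have hnegB2 : (-B) * (-B) = 1 := by rw [neg_mul_neg, hB2]
  have hnegC2 : (-C) * (-C) = 1 := by rw [neg_mul_neg, hC2]
  constructor
  · have hdecomp : S ⊗ₖ S - ((d : ℂ))⁻¹ • B - ((d : ℂ))⁻¹ • C + 1
        = ((1 - (d : ℂ)⁻¹) / 2) • ((1 + B) * (1 + C))
          + ((1 + (d : ℂ)⁻¹) / 2) • ((1 + -B) * (1 + -C)) := by
      rw [hSS]
      rw [show (1 + B) * (1 + C) = 1 + B + C + B * C from by noncomm_ring]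
      rw [show (1 + -B) * (1 + -C) = 1 - B - C + (-B) * (-C) from by noncomm_ring]
      rw [neg_mul_neg]
      module
    rw [hdecomp, ← hcastα, ← hcastβ]
    exact (smulPSD _ hα (prodPSD hB hC hB2 hC2 hcomm)).add
      (smulPSD _ hβ (prodPSD hnegB hnegC hnegB2 hnegC2
        (by rw [neg_mul_neg, neg_mul_neg, hcomm])))
  · have hdecomp : -(S ⊗ₖ S) - ((d : ℂ))⁻¹ • B + ((d : ℂ))⁻¹ • C + 1
        = ((1 - (d : ℂ)⁻¹) / 2) • ((1 + B) * (1 + -C))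
          + ((1 + (d : ℂ)⁻¹) / 2) • ((1 + -B) * (1 + C)) := by
      rw [hSS]
      rw [show (1 + B) * (1 + -C) = 1 + B - C - B * C from by noncomm_ring]
      rw [show (1 + -B) * (1 + C) = 1 - B + C - B * C from by noncomm_ring]
      module
    rw [hdecomp, ← hcastα, ← hcastβ]
    exact (smulPSD _ hα (prodPSD hB hnegC hB2 hnegC2
        (by rw [neg_mul, mul_neg, hcomm]))).add
      (smulPSD _ hβ (prodPSD hnegB hC hnegB2 hC2
        (by rw [neg_mul, mul_neg, hcomm])))
end
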